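/- arXiv:1509.04143 — 2 statements merged into one kernel-verified Lean document; each statement's English description precedes it below -/
import Mathlib

section
/- In the setting of the two deterministic-u renewal processes with α^{(1)} > α^{(2)} > 0 and common v-durations (V_n), for every t ≥ 0 one has N_t^{(2)} ≥ N_t^{(1)}, and moreover N_t^{(2)} − N_t^{(1)} < 1 + inf{ m ≥ 0 : α^{(2)} m + Σ_{n = N_t^{(1)}+1}^{N_t^{(1)}+m} V_n > (α^{(1)} − α^{(2)})(N_t^{(1)} + 1) }. -/
open Finset

lemma stmt7.mono (α : ℝ) (hα : 0 ≤ α) (V : ℕ → ℝ) (hV : ∀ n, 0 ≤ V n)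
    {j k : ℕ} (h : j ≤ k) :
    α * j + ∑ n ∈ range j, V n ≤ α * k + ∑ n ∈ range k, V n := by
  refine add_le_add (mul_le_mul_of_nonneg_left (by exact_mod_cast h) hα) ?_
  exact Finset.sum_le_sum_of_subset_of_nonneg (Finset.range_subset_range.2 h)
    (fun i _ _ => hV i)

/-- For the two deterministic-u renewal processes with `α¹ > α² > 0` and common
v-durations `(V_n)` (so `S^{(i)}_{2k} = αⁱ k + Σ_{n<k} V_n`), if `N¹ = N_t^{(1)}` and
`N² = N_t^{(2)}` (i.e. `S^{(i)}_{2Nⁱ} ≤ t < S^{(i)}_{2Nⁱ+2}`), then `N² ≥ N¹` and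
`N² − N¹ < 1 + inf{m ≥ 0 : α² m + Σ_{n=N¹+1}^{N¹+m} V_n > (α¹ − α²)(N¹ + 1)}`. -/
theorem stmt7 (α₁ α₂ : ℝ) (hα : α₁ > α₂) (hα₂ : 0 < α₂)
    (V : ℕ → ℝ) (hV : ∀ n, 0 < V n)
    (t : ℝ) (ht : 0 ≤ t) (N₁ N₂ : ℕ)
    (hN₁ : α₁ * N₁ + ∑ n ∈ range N₁, V n ≤ t ∧
           t < α₁ * (N₁ + 1) + ∑ n ∈ range (N₁ + 1), V n)
    (hN₂ : α₂ * N₂ + ∑ n ∈ range N₂, V n ≤ t ∧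
           t < α₂ * (N₂ + 1) + ∑ n ∈ range (N₂ + 1), V n) :
    N₁ ≤ N₂ ∧
      N₂ - N₁ < 1 + sInf {m : ℕ |
        (α₁ - α₂) * (N₁ + 1) < α₂ * m + ∑ n ∈ Finset.Ico (N₁ + 1) (N₁ + 1 + m), V n} := by
  have hV' : ∀ n, 0 ≤ V n := fun n => (hV n).le
  have hα₂' : (0:ℝ) ≤ α₂ := hα₂.le
  constructor
  · by_contra h
    push_neg at h
    have h1 : N₂ + 1 ≤ N₁ := h
    have h2 : α₂ * (N₂ + 1) + ∑ n ∈ range (N₂ + 1), V n ≤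
        α₂ * N₁ + ∑ n ∈ range N₁, V n := by
      have := stmt7.mono α₂ hα₂' V hV' h1
      simpa using this
    have h3 : α₂ * N₁ ≤ α₁ * N₁ :=
      mul_le_mul_of_nonneg_right hα.le (Nat.cast_nonneg _)
    linarith [hN₁.1, hN₂.2]
  · -- set nonempty
    set S : Set ℕ := {m : ℕ |
        (α₁ - α₂) * (N₁ + 1) < α₂ * m + ∑ n ∈ Finset.Ico (N₁ + 1) (N₁ + 1 + m), V n}
    have hne : S.Nonempty := by
      obtain ⟨m, hm⟩ := Archimedean.arch ((α₁ - α₂) * (N₁ + 1)) hα₂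
      refine ⟨m + 1, ?_⟩
      have hsum : 0 ≤ ∑ n ∈ Finset.Ico (N₁ + 1) (N₁ + 1 + (m + 1)), V n :=
        Finset.sum_nonneg fun i _ => hV' i
      have hm' : (α₁ - α₂) * (N₁ + 1) ≤ (m : ℝ) * α₂ := by
        simpa [nsmul_eq_mul] using hm
      simp only [S, Set.mem_setOf_eq]
      push_cast
      nlinarith
    have hlb : ∀ k ∈ S, N₂ - N₁ ≤ k := by
      intro k hk
      by_contra hlt
      push_neg at hlt
      -- k < N₂ - N₁, so N₁ + 1 + k ≤ N₂
      have hle : N₁ + 1 + k ≤ N₂ := by omega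
      have h2 := stmt7.mono α₂ hα₂' V hV' hle
      have hsplit : ∑ n ∈ range (N₁ + 1 + k), V n =
          ∑ n ∈ range (N₁ + 1), V n + ∑ n ∈ Finset.Ico (N₁ + 1) (N₁ + 1 + k), V n := by
        simp only [Finset.range_eq_Ico]
        exact (Finset.sum_Ico_consecutive V (Nat.zero_le _) (Nat.le_add_right _ _)).symm
      have hk' : (α₁ - α₂) * (N₁ + 1) < α₂ * k + ∑ n ∈ Finset.Ico (N₁ + 1) (N₁ + 1 + k), V n := hk
      have hchain : α₂ * N₂ + ∑ n ∈ range N₂, V n ≤ t := hN₂.1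
      have ht1 : t < α₁ * (N₁ + 1) + ∑ n ∈ range (N₁ + 1), V n := hN₁.2
      rw [hsplit] at h2
      push_cast at h2
      nlinarith
    have : N₂ - N₁ ≤ sInf S := le_csInf hne hlb
    omega
end

section
/- Let (U^{(1)}_n), (U^{(2)}_n) be two sequences of positive reals and (V_n) a sequence of positive reals. For i ∈ {1,2} define S^{(i)} and κ_t^{(i)}, N_t^{(i)} as in the two-type renewal setting, and set Δ_m = max{ |t − t'| : Σ_{n<m} U^{(1)}_n ≤ t ≤ Σ_{n≤m} U^{(1)}_n, Σ_{n<m} U^{(2)}_n ≤ t' ≤ Σ_{n≤m} U^{(2)}_n }. Then for every t > 0, |κ_t^{(2)} − κ_t^{(1)}| ≤ max_{0 ≤ m ≤ N_t^{(1)}} Δ_m. -/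
open Finset MeasureTheory

/-- Time spent in u-phases before time `t` for the two-type renewal sequence with
u-durations `U` and v-durations `V`: the Lebesgue measure of
`[0,t] ∩ ∪_n [S_{2n}, S_{2n+1}]` where `S_{2n} = Σ_{k<n} (U_k + V_k)`,
`S_{2n+1} = S_{2n} + U_n`. -/
noncomputable def kappa (U V : ℕ → ℝ) (t : ℝ) : ℝ :=
  (volume {s : ℝ | 0 ≤ s ∧ s ≤ t ∧ ∃ n : ℕ,
    (∑ k ∈ range n, (U k + V k)) ≤ s ∧ s ≤ (∑ k ∈ range n, (U k + V k)) + U n}).toReal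

/-- `Δ_m`: the maximal discrepancy `|a − b|` over `a` in the `m`-th u-interval (in internal
time) of process 1 and `b` in that of process 2. -/
noncomputable def Delta (U₁ U₂ : ℕ → ℝ) (m : ℕ) : ℝ :=
  sSup {r : ℝ | ∃ a b : ℝ,
    (∑ n ∈ range m, U₁ n) ≤ a ∧ a ≤ (∑ n ∈ range (m + 1), U₁ n) ∧
    (∑ n ∈ range m, U₂ n) ≤ b ∧ b ≤ (∑ n ∈ range (m + 1), U₂ n) ∧ r = |a - b|}

/-!
Plot the u-time `κ_t` against the v-time `t - κ_t`. As `t` grows, the point `(κ_t, t - κ_t)`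
runs along the staircase with corners `(Σ_{k<n} U_k, Σ_{k<n} V_k)`, moving right during u-phases
and up during v-phases; this follows from `κ` being nondecreasing and `1`-Lipschitz, with
`κ = Σ_{k<n} U_k` at `S_{2n}` and `κ = Σ_{k≤n} U_k` at `S_{2n+1}`. The two staircases have the same
vertical steps and both points lie on the antidiagonal `x + y = t`. Hence either both `κ`'s lie in
the `N`-th u-intervals, or both lie between the right ends of the `m`-th u-intervals of the two
processes for some `m ≤ N`; in either case `Δ_m` bounds their distance.
-/

lemma monotone_sum_range {M : Type*} [AddCommMonoid M] [PartialOrder M] [IsOrderedAddMonoid M]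
    {f : ℕ → M} (hf : ∀ n, 0 ≤ f n) : Monotone fun n => ∑ k ∈ range n, f k :=
  monotone_nat_of_le_succ fun n => by
    simpa only [sum_range_succ] using le_add_of_nonneg_right (hf n)

lemma exists_lt_mem_Ico_of_le_of_lt {α : Type*} [LinearOrder α] {f : ℕ → α} {x : α} {N : ℕ}
    (h0 : f 0 ≤ x) (hN : x < f N) : ∃ m < N, x ∈ Set.Ico (f m) (f (m + 1)) := by
  induction N with
  | zero => exact absurd (hN.trans_le h0) (lt_irrefl x)
  | succ N ih =>
    by_cases h : x < f N
    · obtain ⟨m, hm, hx⟩ := ih h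
      exact ⟨m, hm.trans (Nat.lt_succ_self N), hx⟩
    · exact ⟨N, Nat.lt_succ_self N, not_lt.1 h, hN⟩

/-- `S_{2n}` in the notation of the statement. -/
def renewalTime (U V : ℕ → ℝ) (n : ℕ) : ℝ := ∑ k ∈ range n, (U k + V k)

def uPhases (U V : ℕ → ℝ) : Set ℝ :=
  ⋃ n, Set.Icc (renewalTime U V n) (renewalTime U V n + U n)

section Renewal

variable {U V : ℕ → ℝ}

lemma renewalTime_eq_add (U V : ℕ → ℝ) (n : ℕ) :
    renewalTime U V n = ∑ k ∈ range n, U k + ∑ k ∈ range n, V k :=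
  sum_add_distrib

lemma renewalTime_succ (U V : ℕ → ℝ) (n : ℕ) :
    renewalTime U V (n + 1) = renewalTime U V n + U n + V n := by
  rw [renewalTime, sum_range_succ, ← add_assoc]; rfl

lemma renewalTime_monotone (hU : ∀ n, 0 ≤ U n) (hV : ∀ n, 0 ≤ V n) :
    Monotone (renewalTime U V) :=
  monotone_sum_range fun n => add_nonneg (hU n) (hV n)

lemma renewalTime_add_lt (hU : ∀ n, 0 ≤ U n) (hV : ∀ n, 0 < V n) {k j : ℕ} (hkj : k < j) :
    renewalTime U V k + U k < renewalTime U V j :=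
  calc renewalTime U V k + U k < renewalTime U V (k + 1) := by
        rw [renewalTime_succ]; linarith [hV k]
    _ ≤ renewalTime U V j := renewalTime_monotone hU (fun n => (hV n).le) hkj

lemma kappa_eq_volume (U V : ℕ → ℝ) (t : ℝ) :
    kappa U V t = (volume (Set.Icc 0 t ∩ uPhases U V)).toReal := by
  rw [kappa]
  congr 2
  ext s
  simp [uPhases, renewalTime, and_assoc]

lemma kappa_nonneg (U V : ℕ → ℝ) (t : ℝ) : 0 ≤ kappa U V t := ENNReal.toReal_nonneg

lemma volume_Icc_inter_uPhases_ne_top (U V : ℕ → ℝ) (t : ℝ) :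
    volume (Set.Icc 0 t ∩ uPhases U V) ≠ ⊤ :=
  ((measure_mono Set.inter_subset_left).trans_lt measure_Icc_lt_top).ne

lemma kappa_le_kappa_add_max (U V : ℕ → ℝ) (s t : ℝ) :
    kappa U V t ≤ kappa U V s + max (t - s) 0 := by
  have hfin := volume_Icc_inter_uPhases_ne_top U V s
  have hsub : Set.Icc 0 t ∩ uPhases U V ⊆ (Set.Icc 0 s ∩ uPhases U V) ∪ Set.Ioc s t := by
    rintro x ⟨⟨h0, hxt⟩, hx⟩
    by_cases hxs : x ≤ s
    · exact Or.inl ⟨⟨h0, hxs⟩, hx⟩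
    · exact Or.inr ⟨not_le.1 hxs, hxt⟩
  rw [kappa_eq_volume, kappa_eq_volume, ← ENNReal.toReal_ofReal',
    ← Real.volume_Ioc, ← ENNReal.toReal_add hfin measure_Ioc_lt_top.ne]
  exact ENNReal.toReal_mono (ENNReal.add_ne_top.2 ⟨hfin, measure_Ioc_lt_top.ne⟩)
    ((measure_mono hsub).trans (measure_union_le _ _))

lemma kappa_renewalTime_le (hU : ∀ n, 0 ≤ U n) (hV : ∀ n, 0 ≤ V n) (n : ℕ) :
    kappa U V (renewalTime U V n) ≤ ∑ k ∈ range n, U k := by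
  have hsub : Set.Icc 0 (renewalTime U V n) ∩ uPhases U V ⊆
      (⋃ k ∈ range n, Set.Icc (renewalTime U V k) (renewalTime U V k + U k)) ∪
        {renewalTime U V n} := by
    rintro x ⟨⟨-, hxn⟩, hx⟩
    obtain ⟨j, hjx, hxj⟩ := Set.mem_iUnion.1 hx
    rcases lt_or_ge j n with hjn | hnj
    · exact Or.inl (Set.mem_biUnion (mem_range.2 hjn) ⟨hjx, hxj⟩)
    · exact Or.inr (le_antisymm hxn ((renewalTime_monotone hU hV hnj).trans hjx))
  rw [kappa_eq_volume]
  refine ENNReal.toReal_le_of_le_ofReal (sum_nonneg fun k _ => hU k) ?_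
  calc volume (Set.Icc 0 (renewalTime U V n) ∩ uPhases U V)
      ≤ volume (⋃ k ∈ range n, Set.Icc (renewalTime U V k) (renewalTime U V k + U k)) +
          volume {renewalTime U V n} := (measure_mono hsub).trans (measure_union_le _ _)
    _ ≤ ∑ k ∈ range n, volume (Set.Icc (renewalTime U V k) (renewalTime U V k + U k)) + 0 :=
        add_le_add (measure_biUnion_finset_le _ _) (measure_singleton _).le
    _ = ENNReal.ofReal (∑ k ∈ range n, U k) := by
        simp [Real.volume_Icc, ENNReal.ofReal_sum_of_nonneg fun k _ => hU k]

lemma sum_le_kappa_renewalTime_add (hU : ∀ n, 0 ≤ U n) (hV : ∀ n, 0 < V n) (n : ℕ) :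
    ∑ k ∈ range (n + 1), U k ≤ kappa U V (renewalTime U V n + U n) := by
  set I : ℕ → Set ℝ := fun k => Set.Icc (renewalTime U V k) (renewalTime U V k + U k)
  have hsub : (⋃ k ∈ range (n + 1), I k) ⊆ Set.Icc 0 (renewalTime U V n + U n) ∩ uPhases U V := by
    refine Set.iUnion₂_subset fun k hk x hx => ⟨⟨?_, hx.2.trans ?_⟩, Set.mem_iUnion.2 ⟨k, hx⟩⟩
    · simpa [renewalTime] using
        (renewalTime_monotone hU (fun n => (hV n).le) (Nat.zero_le k)).trans hx.1
    · rcases (Nat.lt_succ_iff.1 (mem_range.1 hk)).lt_or_eq with hkn | rfl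
      · exact (renewalTime_add_lt hU hV hkn).le.trans (le_add_of_nonneg_right (hU n))
      · exact le_rfl
  have hdisj : Set.PairwiseDisjoint ↑(range (n + 1)) I := by
    have key : ∀ i j, i < j → Disjoint (I i) (I j) := fun i j hij =>
      Set.disjoint_left.2 fun x hi hj =>
        ((renewalTime_add_lt hU hV hij).trans_le (hj.1.trans hi.2)).false
    intro i _ j _ hij
    rcases hij.lt_or_gt with h | h
    · exact key i j h
    · exact (key j i h).symm
  rw [kappa_eq_volume]
  calc ∑ k ∈ range (n + 1), U k = (volume (⋃ k ∈ range (n + 1), I k)).toReal := by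
        rw [measure_biUnion_finset hdisj fun _ _ => measurableSet_Icc,
          ENNReal.toReal_sum fun _ _ => measure_Icc_lt_top.ne]
        simp [Real.volume_Icc, hU]
    _ ≤ _ := ENNReal.toReal_mono (volume_Icc_inter_uPhases_ne_top U V _) (measure_mono hsub)

lemma kappa_le_sub_of_lt_kappa (hU : ∀ n, 0 ≤ U n) (hV : ∀ n, 0 ≤ V n) {n : ℕ} {t : ℝ}
    (h : ∑ k ∈ range n, U k < kappa U V t) : kappa U V t ≤ t - ∑ k ∈ range n, V k := by
  have key := (kappa_le_kappa_add_max U V (renewalTime U V n) t).trans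
    (add_le_add_left (kappa_renewalTime_le hU hV n) _)
  rw [renewalTime_eq_add] at key
  rcases max_cases (t - (∑ k ∈ range n, U k + ∑ k ∈ range n, V k)) 0 with ⟨hm, -⟩ | ⟨hm, -⟩ <;>
    rw [hm] at key <;> linarith

lemma sub_le_kappa_of_kappa_lt (hU : ∀ n, 0 ≤ U n) (hV : ∀ n, 0 < V n) {n : ℕ} {t : ℝ}
    (h : kappa U V t < ∑ k ∈ range (n + 1), U k) : t - ∑ k ∈ range n, V k ≤ kappa U V t := by
  have key := (sum_le_kappa_renewalTime_add hU hV n).trans (kappa_le_kappa_add_max U V t _)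
  rw [renewalTime_eq_add, sum_range_succ] at key
  rw [sum_range_succ] at h
  rcases max_cases (∑ k ∈ range n, U k + ∑ k ∈ range n, V k + U n - t) 0 with ⟨hm, -⟩ | ⟨hm, -⟩ <;>
    rw [hm] at key <;> linarith

lemma kappa_eq_min_of_mem_Ico (hU : ∀ n, 0 ≤ U n) (hV : ∀ n, 0 < V n) {N : ℕ} {t : ℝ}
    (ht : t ∈ Set.Ico (renewalTime U V N) (renewalTime U V (N + 1))) :
    kappa U V t = min (t - ∑ k ∈ range N, V k) (∑ k ∈ range (N + 1), U k) := by
  obtain ⟨hN, hN'⟩ := ht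
  rw [renewalTime_eq_add] at hN hN'
  refine le_antisymm (le_min ?_ ?_) ?_
  · by_cases h : ∑ k ∈ range N, U k < kappa U V t
    · exact kappa_le_sub_of_lt_kappa hU (fun n => (hV n).le) h
    · linarith
  · by_contra! h
    linarith [kappa_le_sub_of_lt_kappa hU (fun n => (hV n).le) h]
  · by_cases h : kappa U V t < ∑ k ∈ range (N + 1), U k
    · exact min_le_of_left_le (sub_le_kappa_of_kappa_lt hU hV h)
    · exact min_le_of_right_le (not_lt.1 h)


lemma kappa_mem_Icc_of_mem_Ico (hU : ∀ n, 0 ≤ U n) (hV : ∀ n, 0 < V n) {N : ℕ} {t : ℝ}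
    (ht : t ∈ Set.Ico (renewalTime U V N) (renewalTime U V (N + 1))) :
    kappa U V t ∈ Set.Icc (∑ k ∈ range N, U k) (∑ k ∈ range (N + 1), U k) := by
  have hN := ht.1
  rw [renewalTime_eq_add] at hN
  rw [kappa_eq_min_of_mem_Ico hU hV ht]
  exact ⟨le_min (by linarith) (monotone_sum_range hU N.le_succ), min_le_right _ _⟩

end Renewal

section Delta

variable {U₁ U₂ : ℕ → ℝ} {m : ℕ}

lemma abs_sub_le_Delta {a b : ℝ}
    (ha : a ∈ Set.Icc (∑ n ∈ range m, U₁ n) (∑ n ∈ range (m + 1), U₁ n))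
    (hb : b ∈ Set.Icc (∑ n ∈ range m, U₂ n) (∑ n ∈ range (m + 1), U₂ n)) :
    |a - b| ≤ Delta U₁ U₂ m := by
  refine le_csSup ⟨max |∑ n ∈ range m, U₁ n| |∑ n ∈ range (m + 1), U₁ n| +
    max |∑ n ∈ range m, U₂ n| |∑ n ∈ range (m + 1), U₂ n|, ?_⟩ ⟨a, b, ha.1, ha.2, hb.1, hb.2, rfl⟩
  rintro r ⟨a, b, h₁, h₂, h₃, h₄, rfl⟩
  exact (abs_sub _ _).trans (add_le_add (abs_le_max_abs_abs h₁ h₂) (abs_le_max_abs_abs h₃ h₄))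

lemma abs_sub_le_Delta_of_mem_uIcc (h₁ : 0 ≤ U₁ m) (h₂ : 0 ≤ U₂ m) {x y : ℝ}
    (hx : x ∈ Set.uIcc (∑ n ∈ range (m + 1), U₁ n) (∑ n ∈ range (m + 1), U₂ n))
    (hy : y ∈ Set.uIcc (∑ n ∈ range (m + 1), U₁ n) (∑ n ∈ range (m + 1), U₂ n)) :
    |x - y| ≤ Delta U₁ U₂ m := by
  refine (Set.abs_sub_le_of_uIcc_subset_uIcc (Set.uIcc_subset_uIcc hy hx)).trans
    ((abs_sub_comm _ _).trans_le (abs_sub_le_Delta ⟨?_, le_rfl⟩ ⟨?_, le_rfl⟩)) <;>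
  simpa only [sum_range_succ, le_add_iff_nonneg_right]

end Delta

section Comparison

variable {U₁ U₂ V : ℕ → ℝ} {t : ℝ} {N : ℕ}

lemma abs_kappa_sub_kappa_le_Delta (hU₁ : ∀ n, 0 ≤ U₁ n) (hU₂ : ∀ n, 0 ≤ U₂ n)
    (hV : ∀ n, 0 < V n) (ht : t ∈ Set.Ico (renewalTime U₁ V N) (renewalTime U₁ V (N + 1)))
    (h : ∑ k ∈ range N, U₂ k ≤ kappa U₂ V t) :
    |kappa U₂ V t - kappa U₁ V t| ≤ Delta U₁ U₂ N := by
  have hκ₁ := kappa_mem_Icc_of_mem_Ico hU₁ hV ht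
  rcases le_or_gt (kappa U₂ V t) (∑ k ∈ range (N + 1), U₂ k) with hle | hlt
  · exact (abs_sub_comm _ _).trans_le (abs_sub_le_Delta hκ₁ ⟨h, hle⟩)
  -- process 2 has finished its `N`-th u-phase, so its v-time is at least `Σ_{k≤N} V_k`,
  -- more than process 1 has spent in v-phases: `κ₂ ≤ κ₁`
  have h₂ := kappa_le_sub_of_lt_kappa hU₂ (fun n => (hV n).le) hlt
  have hW := monotone_sum_range (fun n => (hV n).le) N.le_succ
  have hN := ht.2
  rw [renewalTime_eq_add] at hN
  have hκ : kappa U₂ V t ≤ kappa U₁ V t := by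
    rw [kappa_eq_min_of_mem_Ico hU₁ hV ht]
    exact le_min (by linarith) (by linarith)
  exact abs_sub_le_Delta_of_mem_uIcc (hU₁ N) (hU₂ N)
    (Set.Icc_subset_uIcc' ⟨hlt.le, by linarith⟩) (Set.Icc_subset_uIcc' ⟨hlt.le.trans hκ, hκ₁.2⟩)

lemma exists_lt_abs_kappa_sub_kappa_le_Delta (hU₁ : ∀ n, 0 ≤ U₁ n) (hU₂ : ∀ n, 0 ≤ U₂ n)
    (hV : ∀ n, 0 < V n) (ht : t ∈ Set.Ico (renewalTime U₁ V N) (renewalTime U₁ V (N + 1)))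
    (h : kappa U₂ V t < ∑ k ∈ range N, U₂ k) :
    ∃ m < N, |kappa U₂ V t - kappa U₁ V t| ≤ Delta U₁ U₂ m := by
  obtain ⟨m, hm, -, hm'⟩ := exists_lt_mem_Ico_of_le_of_lt
    (f := fun n => ∑ k ∈ range n, U₂ k) (by simpa using kappa_nonneg U₂ V t) h
  -- process 2 is still in its `m`-th u-phase, having spent at most `Σ_{k<m} V_k` in v-phases
  have h₂ := sub_le_kappa_of_kappa_lt hU₂ hV hm'
  have hκ₁ := (kappa_mem_Icc_of_mem_Ico hU₁ hV ht).1
  have hκ₁' : kappa U₁ V t ≤ t - ∑ k ∈ range N, V k :=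
    kappa_eq_min_of_mem_Ico hU₁ hV ht ▸ min_le_left _ _
  have hA := monotone_sum_range hU₁ (Nat.succ_le_of_lt hm)
  have hW := monotone_sum_range (fun n => (hV n).le) hm.le
  have hN := ht.1
  rw [renewalTime_eq_add] at hN
  exact ⟨m, hm, abs_sub_le_Delta_of_mem_uIcc (hU₁ m) (hU₂ m)
    (Set.Icc_subset_uIcc ⟨by linarith, hm'.le⟩) (Set.Icc_subset_uIcc ⟨by linarith, by linarith⟩)⟩

end Comparison

theorem stmt9_general (U₁ U₂ V : ℕ → ℝ)
    (hU₁ : ∀ n, 0 < U₁ n) (hU₂ : ∀ n, 0 < U₂ n) (hV : ∀ n, 0 < V n)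
    (t : ℝ) (N₁ : ℕ)
    (hN₁ : (∑ k ∈ range N₁, (U₁ k + V k)) ≤ t ∧
           t < ∑ k ∈ range (N₁ + 1), (U₁ k + V k)) :
    |kappa U₂ V t - kappa U₁ V t|
      ≤ (Finset.range (N₁ + 1)).sup' Finset.nonempty_range_add_one (Delta U₁ U₂) := by
  have hU₁' : ∀ n, 0 ≤ U₁ n := fun n => (hU₁ n).le
  have hU₂' : ∀ n, 0 ≤ U₂ n := fun n => (hU₂ n).le
  rcases le_or_gt (∑ k ∈ range N₁, U₂ k) (kappa U₂ V t) with h | h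
  · exact (abs_kappa_sub_kappa_le_Delta hU₁' hU₂' hV hN₁ h).trans
      (le_sup' _ (self_mem_range_succ N₁))
  · obtain ⟨m, hm, hΔ⟩ := exists_lt_abs_kappa_sub_kappa_le_Delta hU₁' hU₂' hV hN₁ h
    exact hΔ.trans (le_sup' _ (mem_range.2 (hm.trans N₁.lt_succ_self)))

/-- pathwise bound `|κ_t^{(2)} − κ_t^{(1)}| ≤ max_{0 ≤ m ≤ N_t^{(1)}} Δ_m` for
two two-type renewal processes sharing the v-durations `(V_n)`. -/
theorem stmt9 (U₁ U₂ V : ℕ → ℝ)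
    (hU₁ : ∀ n, 0 < U₁ n) (hU₂ : ∀ n, 0 < U₂ n) (hV : ∀ n, 0 < V n)
    (t : ℝ) (ht : 0 < t) (N₁ : ℕ)
    (hN₁ : (∑ k ∈ range N₁, (U₁ k + V k)) ≤ t ∧
           t < ∑ k ∈ range (N₁ + 1), (U₁ k + V k)) :
    |kappa U₂ V t - kappa U₁ V t|
      ≤ (Finset.range (N₁ + 1)).sup' Finset.nonempty_range_add_one (Delta U₁ U₂) :=
  stmt9_general U₁ U₂ V hU₁ hU₂ hV t N₁ hN₁
end
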